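/- arXiv:2509.25619 — 2 statements merged into one kernel-verified Lean document; each statement's English description precedes it below -/
import Mathlib

section
/- Let Ω be a commutative semigroup and {T_α: V → L}_{α∈Ω} a collection of linear maps, with (V;ρ,θ) a representation of a Lie-Yamaguti algebra L and Γ a (2,3)-cocycle. Then {T_α} is a Γ-twisted Rota-Baxter family if and only if the family of graphs Gr(T_α) = {(T_α u, u) | u ∈ V} is a subalgebra family of the Γ-twisted semidirect product L ⋉_Γ V, i.e., [Gr(T_α), Gr(T_β)]_Γ ⊆ Gr(T_{αβ}) and {Gr(T_α), Gr(T_β), Gr(T_γ)}_Γ ⊆ Gr(T_{αβγ}) for all α,β,γ ∈ Ω. -/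
open scoped TensorProduct

section Defs

variable {L V W Ω : Type*} [AddCommGroup L] [AddCommGroup V] [AddCommGroup W]

/-- The axioms (5.1)-(5.5) of an `Ω`-Lie-Yamaguti algebra, for a family of
binary operations `bb` and a family of ternary operations `tt`. -/
def IsOmegaLY [Mul Ω] (bb : Ω → Ω → L → L → L)
    (tt : Ω → Ω → Ω → L → L → L → L) : Prop :=
  (∀ α β x y, bb α β x y = - bb β α y x) ∧
  (∀ α β γ x y z, tt α β γ x y z = - tt β α γ y x z) ∧
  (∀ α β γ x y z,
    bb (α*β) γ (bb α β x y) z + bb (β*γ) α (bb β γ y z) x + bb (γ*α) β (bb γ α z x) y +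
      tt α β γ x y z + tt β γ α y z x + tt γ α β z x y = 0) ∧
  (∀ α β γ ς x y z a,
    tt (α*β) γ ς (bb α β x y) z a + tt (β*γ) α ς (bb β γ y z) x a +
      tt (γ*α) β ς (bb γ α z x) y a = 0) ∧
  (∀ α β γ ς a x y z,
    tt ς α (β*γ) a x (bb β γ y z) =
      bb (ς*α*β) γ (tt ς α β a x y) z + bb β (ς*α*γ) y (tt ς α γ a x z)) ∧
  (∀ α β γ ς τ a c x y z,
    tt ς τ (α*β*γ) a c (tt α β γ x y z) =
      tt (ς*τ*α) β γ (tt ς τ α a c x) y z + tt α (ς*τ*β) γ x (tt ς τ β a c y) z +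
        tt α β (ς*τ*γ) x y (tt ς τ γ a c z))

/-- A Lie-Yamaguti algebra structure: skew-symmetric binary bracket `b`, ternary
bracket `t` skew-symmetric in its first two arguments, satisfying (2.1)-(2.4). -/
def IsLieYamaguti (b : L → L → L) (t : L → L → L → L) : Prop :=
  IsOmegaLY (Ω := PUnit.{1}) (fun _ _ => b) (fun _ _ _ => t)

/-- The operator `D(x,y) = θ(y,x) - θ(x,y) - ρ([x,y]) + ρ(x)ρ(y) - ρ(y)ρ(x)`. -/
def Dmap (b : L → L → L) (ρ : L → V → V) (θ : L → L → V → V)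
    (x y : L) (v : V) : V :=
  θ y x v - θ x y v - ρ (b x y) v + ρ x (ρ y v) - ρ y (ρ x v)

/-- The family version of `D` for representations of `Ω`-Lie-Yamaguti algebras (5.11). -/
def DmapΩ [Mul Ω] (bb : Ω → Ω → V → V → V) (ρf : Ω → Ω → V → W → W)
    (θf : Ω → Ω → Ω → V → V → W → W) (α β ς : Ω) (u v : V) (w : W) : W :=
  θf β α ς v u w - θf α β ς u v w - ρf (α*β) ς (bb α β u v) w +
    ρf α (β*ς) u (ρf β ς v w) - ρf β (α*ς) v (ρf α ς u w)

/-- The axioms (5.6)-(5.10) of a representation of an `Ω`-Lie-Yamaguti algebra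
`(V, bb, tt)` on `W`. -/
def IsOmegaLYRep [Mul Ω] (bb : Ω → Ω → V → V → V) (tt : Ω → Ω → Ω → V → V → V → V)
    (ρf : Ω → Ω → V → W → W) (θf : Ω → Ω → Ω → V → V → W → W) : Prop :=
  (∀ α β γ ς x y z u, θf (α*β) γ ς (bb α β x y) z u
      - θf α γ (β*ς) x z (ρf β ς y u) + θf β γ (α*ς) y z (ρf α ς x u) = 0) ∧
  (∀ α β γ ς x y z u, DmapΩ bb ρf θf α β (γ*ς) x y (ρf γ ς z u)
      - ρf γ (α*β*ς) z (DmapΩ bb ρf θf α β ς x y u)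
      - ρf (α*β*γ) ς (tt α β γ x y z) u = 0) ∧
  (∀ α β γ ς x y z u, θf α (β*γ) ς x (bb β γ y z) u
      - ρf β (α*γ*ς) y (θf α γ ς x z u) + ρf γ (α*β*ς) z (θf α β ς x y u) = 0) ∧
  (∀ α β γ ς τ a x y z u, DmapΩ bb ρf θf τ α (β*γ*ς) a x (θf β γ ς y z u)
      - θf β γ (τ*α*ς) y z (DmapΩ bb ρf θf τ α ς a x u)
      - θf (τ*α*β) γ ς (tt τ α β a x y) z u
      - θf β (τ*α*γ) ς y (tt τ α γ a x z) u = 0) ∧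
  (∀ α β γ ς τ a x y z u, θf τ (α*β*γ) ς a (tt α β γ x y z) u
      - θf β γ (τ*α*ς) y z (θf τ α ς a x u)
      + θf α γ (τ*β*ς) x z (θf τ β ς a y u)
      - DmapΩ bb ρf θf α β (τ*γ*ς) x y (θf τ γ ς a z u) = 0)

/-- A representation of a Lie-Yamaguti algebra `(L, b, t)` on `V`:
the axioms (2.5)-(2.9). -/
def IsLYRep (b : L → L → L) (t : L → L → L → L)
    (ρ : L → V → V) (θ : L → L → V → V) : Prop :=
  IsOmegaLYRep (Ω := PUnit.{1}) (fun _ _ => b) (fun _ _ _ => t)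
    (fun _ _ => ρ) (fun _ _ _ => θ)

/-- A `(2,3)`-cocycle `(Γ₁, Γ₂)` of a Lie-Yamaguti algebra `(L, b, t)` with
coefficients in the representation `(V; ρ, θ)`: conditions (2.14)-(2.17). -/
def Is23Cocycle (b : L → L → L) (t : L → L → L → L) (ρ : L → V → V)
    (θ : L → L → V → V) (Γ₁ : L → L → V) (Γ₂ : L → L → L → V) : Prop :=
  (∀ x y z, -(ρ x (Γ₁ y z)) - ρ y (Γ₁ z x) - ρ z (Γ₁ x y)
      + Γ₁ (b x y) z + Γ₁ (b y z) x + Γ₁ (b z x) y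
      + Γ₂ x y z + Γ₂ y z x + Γ₂ z x y = 0) ∧
  (∀ x₁ y₁ x₂ y₂, θ x₁ y₂ (Γ₁ y₁ x₂) + θ y₁ y₂ (Γ₁ x₂ x₁) + θ x₂ y₂ (Γ₁ x₁ y₁)
      + Γ₂ (b x₁ y₁) x₂ y₂ + Γ₂ (b y₁ x₂) x₁ y₂ + Γ₂ (b x₂ x₁) y₁ y₂ = 0) ∧
  (∀ x₁ y₁ x₂ y₂, -(ρ x₂ (Γ₂ x₁ y₁ y₂)) + ρ y₂ (Γ₂ x₁ y₁ x₂) + Γ₂ x₁ y₁ (b x₂ y₂)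
      + Dmap b ρ θ x₁ y₁ (Γ₁ x₂ y₂) - Γ₁ (t x₁ y₁ x₂) y₂ - Γ₁ x₂ (t x₁ y₁ y₂) = 0) ∧
  (∀ x₁ y₁ x₂ y₂ z, -(θ y₂ z (Γ₂ x₁ y₁ x₂)) + θ x₂ z (Γ₂ x₁ y₁ y₂)
      + Dmap b ρ θ x₁ y₁ (Γ₂ x₂ y₂ z) - Dmap b ρ θ x₂ y₂ (Γ₂ x₁ y₁ z)
      - Γ₂ (t x₁ y₁ x₂) y₂ z - Γ₂ x₂ (t x₁ y₁ y₂) z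
      + Γ₂ x₁ y₁ (t x₂ y₂ z) - Γ₂ x₂ y₂ (t x₁ y₁ z) = 0)

/-- A `Γ`-twisted Rota-Baxter family `{T_α}_{α ∈ Ω}` on a representation
`(V; ρ, θ)` of a Lie-Yamaguti algebra `(L, b, t)`: identities (3.1)-(3.2). -/
def IsTwistedRBFamily [Mul Ω] (b : L → L → L) (t : L → L → L → L)
    (ρ : L → V → V) (θ : L → L → V → V) (Γ₁ : L → L → V) (Γ₂ : L → L → L → V)
    (T : Ω → V → L) : Prop :=
  (∀ α β u v, b (T α u) (T β v)
      = T (α*β) (ρ (T α u) v - ρ (T β v) u + Γ₁ (T α u) (T β v))) ∧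
  (∀ α β γ u v w, t (T α u) (T β v) (T γ w)
      = T (α*β*γ) (Dmap b ρ θ (T α u) (T β v) w - θ (T α u) (T γ w) v
          + θ (T β v) (T γ w) u + Γ₂ (T α u) (T β v) (T γ w)))

/-- A generalized Reynolds operator: a `Γ`-twisted Rota-Baxter family indexed by
the trivial semigroup. -/
def IsGenReynolds (b : L → L → L) (t : L → L → L → L)
    (ρ : L → V → V) (θ : L → L → V → V) (Γ₁ : L → L → V) (Γ₂ : L → L → L → V)
    (T : V → L) : Prop :=
  IsTwistedRBFamily (Ω := PUnit.{1}) b t ρ θ Γ₁ Γ₂ (fun _ => T)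

/-- The derived bracket `[x,y]*_{α,β} = x •_α y - y •_β x + x ∨_{α,β} y` (4.25). -/
def nsStarB [Mul Ω] (bul : Ω → L → L → L) (vee : Ω → Ω → L → L → L)
    (α β : Ω) (x y : L) : L :=
  bul α x y - bul β y x + vee α β x y

/-- The derived operation `{x,y,z}*_{α,β}` (4.26). -/
def nsStarT [Mul Ω] (bul : Ω → L → L → L) (vee : Ω → Ω → L → L → L)
    (tr : Ω → Ω → L → L → L → L) (α β : Ω) (x y z : L) : L :=
  tr β α z y x - tr α β z x y + bul α x (bul β y z) - bul β y (bul α x z)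
    - bul (α*β) (nsStarB bul vee α β x y) z

/-- The derived operation `[[x,y,z]]_{α,β,γ}` (4.27). -/
def nsDbr [Mul Ω] (bul : Ω → L → L → L) (vee : Ω → Ω → L → L → L)
    (tr : Ω → Ω → L → L → L → L) (br : Ω → Ω → Ω → L → L → L → L)
    (α β γ : Ω) (x y z : L) : L :=
  nsStarT bul vee tr α β x y z + tr β γ x y z - tr α γ y x z + br α β γ x y z

/-- An NS-Lie-Yamaguti family algebra: the skew-symmetry conditions together with
axioms (4.16)-(4.24). -/
def IsNSLYFamily [Mul Ω] (bul : Ω → L → L → L) (vee : Ω → Ω → L → L → L)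
    (tr : Ω → Ω → L → L → L → L) (br : Ω → Ω → Ω → L → L → L → L) : Prop :=
  (∀ α β x y, vee α β x y = - vee β α y x) ∧
  (∀ α β γ x y z, br α β γ x y z = - br β α γ y x z) ∧
  -- (4.16)
  (∀ α β γ x y z a, tr (α*β) γ a (nsStarB bul vee α β x y) z
      - tr α γ (bul β y a) x z + tr β γ (bul α x a) y z = 0) ∧
  -- (4.17)
  (∀ α β γ x y z a, nsStarT bul vee tr α β x y (bul γ z a)
      - bul γ z (nsStarT bul vee tr α β x y a)
      - bul (α*β*γ) (nsDbr bul vee tr br α β γ x y z) a = 0) ∧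
  -- (4.18)
  (∀ α β γ x y z a, tr α (β*γ) a x (nsStarB bul vee β γ y z)
      - bul β y (tr α γ a x z) + bul γ z (tr α β a x y) = 0) ∧
  -- (4.19)
  (∀ α β γ ς x y z a c, nsStarT bul vee tr α β x y (tr γ ς c z a)
      - tr γ ς (nsStarT bul vee tr α β x y c) z a
      - tr (α*β*γ) ς c (nsDbr bul vee tr br α β γ x y z) a
      - tr γ (α*β*ς) c z (nsDbr bul vee tr br α β ς x y a) = 0) ∧
  -- (4.20)
  (∀ α β γ ς x y z a c, tr α (β*γ*ς) c x (nsDbr bul vee tr br β γ ς y z a)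
      - tr γ ς (tr α β c x y) z a + tr β ς (tr α γ c x z) y a
      - nsStarT bul vee tr β γ y z (tr α ς c x a) = 0) ∧
  -- (4.21)
  (∀ α β γ x y z, vee (α*β) γ (nsStarB bul vee α β x y) z
      + vee (β*γ) α (nsStarB bul vee β γ y z) x
      + vee (γ*α) β (nsStarB bul vee γ α z x) y
      - bul γ z (vee α β x y) - bul α x (vee β γ y z) - bul β y (vee γ α z x)
      + br α β γ x y z + br β γ α y z x + br γ α β z x y = 0) ∧
  -- (4.22)
  (∀ α β γ ς x y z a, tr γ ς (vee α β x y) z a + tr α ς (vee β γ y z) x a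
      + tr β ς (vee γ α z x) y a
      + br (α*β) γ ς (nsStarB bul vee α β x y) z a
      + br (β*γ) α ς (nsStarB bul vee β γ y z) x a
      + br (γ*α) β ς (nsStarB bul vee γ α z x) y a = 0) ∧
  -- (4.23)
  (∀ α β γ ς x y z a, -(bul γ z (br α β ς x y a)) + bul ς a (br α β γ x y z)
      + br α β (γ*ς) x y (nsStarB bul vee γ ς z a)
      + nsStarT bul vee tr α β x y (vee γ ς z a)
      - vee (α*β*γ) ς (nsDbr bul vee tr br α β γ x y z) a
      - vee γ (α*β*ς) z (nsDbr bul vee tr br α β ς x y a) = 0) ∧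
  -- (4.24)
  (∀ α β γ ς τ x y z a c, -(tr ς τ (br α β γ x y z) a c)
      + tr γ τ (br α β ς x y a) z c
      + nsStarT bul vee tr α β x y (br γ ς τ z a c)
      - nsStarT bul vee tr γ ς z a (br α β τ x y c)
      - br (α*β*γ) ς τ (nsDbr bul vee tr br α β γ x y z) a c
      - br γ (α*β*ς) τ z (nsDbr bul vee tr br α β ς x y a) c
      + br α β (γ*ς*τ) x y (nsDbr bul vee tr br γ ς τ z a c)
      - br γ ς (α*β*τ) z a (nsDbr bul vee tr br α β τ x y c) = 0)

/-- An NS-Lie-Yamaguti algebra: the family version over a trivial index semigroup,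
i.e. the axioms (4.1)-(4.9). -/
def IsNSLY (bu : L → L → L) (ve : L → L → L) (tr3 : L → L → L → L)
    (br3 : L → L → L → L) : Prop :=
  IsNSLYFamily (Ω := PUnit.{1}) (fun _ => bu) (fun _ _ => ve)
    (fun _ _ => tr3) (fun _ _ _ => br3)

/-- Degree-0 coboundary: `(∂(a,c))_α(u) = T_α(D(a,c)u + Γ₂(a,c,T_α u)) - {a,c,T_α u}` (6.1). -/
def cobound0 [Mul Ω] (b : L → L → L) (t : L → L → L → L)
    (ρ : L → V → V) (θ : L → L → V → V) (Γ₂ : L → L → L → V)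
    (T : Ω → V → L) (a c : L) (α : Ω) (u : V) : L :=
  T α (Dmap b ρ θ a c u + Γ₂ a c (T α u)) - t a c (T α u)

/-- First component `∂_{Ω,I}` of the coboundary of a degree-1 cochain `f`. -/
def coboundI [Mul Ω] (b : L → L → L) (ρ : L → V → V) (Γ₁ : L → L → V)
    (T : Ω → V → L) (f : Ω → V → L) (α β : Ω) (u v : V) : L :=
  b (T α u) (f β v) + T (α*β) (ρ (f β v) u + Γ₁ (f β v) (T α u))
    - b (T β v) (f α u) - T (β*α) (ρ (f α u) v + Γ₁ (f α u) (T β v))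
    - f (α*β) (ρ (T α u) v - ρ (T β v) u + Γ₁ (T α u) (T β v))

/-- Second component `∂_{Ω,II}` of the coboundary of a degree-1 cochain `f`. -/
def coboundII [Mul Ω] (b : L → L → L) (t : L → L → L → L)
    (ρ : L → V → V) (θ : L → L → V → V) (Γ₂ : L → L → L → V)
    (T : Ω → V → L) (f : Ω → V → L) (α β γ : Ω) (u v w : V) : L :=
  t (T α u) (T β v) (f γ w)
    - T (α*β*γ) (θ (T β v) (f γ w) u - θ (T α u) (f γ w) v
        + Γ₂ (T α u) (T β v) (f γ w))
    + t (f α u) (T β v) (T γ w)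
    - T (α*β*γ) (Dmap b ρ θ (f α u) (T β v) w - θ (f α u) (T γ w) v
        + Γ₂ (f α u) (T β v) (T γ w))
    - t (f β v) (T α u) (T γ w)
    + T (β*α*γ) (Dmap b ρ θ (f β v) (T α u) w - θ (f β v) (T γ w) u
        + Γ₂ (f β v) (T α u) (T γ w))
    - f (α*β*γ) (Dmap b ρ θ (T α u) (T β v) w + θ (T β v) (T γ w) u
        - θ (T α u) (T γ w) v + Γ₂ (T α u) (T β v) (T γ w))

end Defs

theorem exists_pair_eq_graph_iff {L V : Type*} (f : V → L) (x : L) (v : V) :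
    (∃ w, (x, v) = (f w, w)) ↔ x = f v := by
  constructor
  · rintro ⟨w, hw⟩
    obtain ⟨hx, rfl⟩ := Prod.mk.inj hw
    exact hx
  · intro hx
    exact ⟨v, by rw [hx]⟩

theorem twistedRBFamily_iff_graph_subalgebra_general {K L V Ω : Type*} [Field K]
    [AddCommGroup L] [Module K L] [AddCommGroup V] [Module K V] [CommSemigroup Ω]
    (b : L →ₗ[K] L →ₗ[K] L) (t : L →ₗ[K] L →ₗ[K] L →ₗ[K] L)
    (ρ : L →ₗ[K] V →ₗ[K] V) (θ : L →ₗ[K] L →ₗ[K] V →ₗ[K] V)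
    (Γ₁ : L →ₗ[K] L →ₗ[K] V) (Γ₂ : L →ₗ[K] L →ₗ[K] L →ₗ[K] V)
    (T : Ω → V →ₗ[K] L) :
    IsTwistedRBFamily (fun x y => b x y) (fun x y z => t x y z)
      (fun x v => ρ x v) (fun x y v => θ x y v)
      (fun x y => Γ₁ x y) (fun x y z => Γ₂ x y z) (fun α u => T α u)
    ↔ ((∀ (α β : Ω) (u v : V), ∃ w : V,
          ((b (T α u) (T β v) : L),
            (ρ (T α u) v - ρ (T β v) u + Γ₁ (T α u) (T β v) : V))
          = (T (α * β) w, w)) ∧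
       (∀ (α β γ : Ω) (u v w : V), ∃ s : V,
          ((t (T α u) (T β v) (T γ w) : L),
            (Dmap (fun x y => b x y) (fun x v => ρ x v) (fun x y v => θ x y v)
                (T α u) (T β v) w
              - θ (T α u) (T γ w) v + θ (T β v) (T γ w) u
              + Γ₂ (T α u) (T β v) (T γ w) : V))
          = (T (α * β * γ) s, s))) := by
  simp only [IsTwistedRBFamily, exists_pair_eq_graph_iff (T _)]

/-- `{T_α}` is a `Γ`-twisted Rota-Baxter family iff the family of
graphs `Gr(T_α)` is a subalgebra family of the twisted semidirect product
`L ⋉_Γ V`. -/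
theorem twistedRBFamily_iff_graph_subalgebra {K L V Ω : Type*} [Field K]
    [AddCommGroup L] [Module K L] [AddCommGroup V] [Module K V] [CommSemigroup Ω]
    (b : L →ₗ[K] L →ₗ[K] L) (t : L →ₗ[K] L →ₗ[K] L →ₗ[K] L)
    (ρ : L →ₗ[K] V →ₗ[K] V) (θ : L →ₗ[K] L →ₗ[K] V →ₗ[K] V)
    (Γ₁ : L →ₗ[K] L →ₗ[K] V) (Γ₂ : L →ₗ[K] L →ₗ[K] L →ₗ[K] V)
    (T : Ω → V →ₗ[K] L)
    (hLY : IsLieYamaguti (fun x y => b x y) (fun x y z => t x y z))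
    (hRep : IsLYRep (fun x y => b x y) (fun x y z => t x y z)
      (fun x v => ρ x v) (fun x y v => θ x y v))
    (hCoc : Is23Cocycle (fun x y => b x y) (fun x y z => t x y z)
      (fun x v => ρ x v) (fun x y v => θ x y v)
      (fun x y => Γ₁ x y) (fun x y z => Γ₂ x y z)) :
    IsTwistedRBFamily (fun x y => b x y) (fun x y z => t x y z)
      (fun x v => ρ x v) (fun x y v => θ x y v)
      (fun x y => Γ₁ x y) (fun x y z => Γ₂ x y z) (fun α u => T α u)
    ↔ ((∀ (α β : Ω) (u v : V), ∃ w : V,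
          ((b (T α u) (T β v) : L),
            (ρ (T α u) v - ρ (T β v) u + Γ₁ (T α u) (T β v) : V))
          = (T (α * β) w, w)) ∧
       (∀ (α β γ : Ω) (u v w : V), ∃ s : V,
          ((t (T α u) (T β v) (T γ w) : L),
            (Dmap (fun x y => b x y) (fun x v => ρ x v) (fun x y v => θ x y v)
                (T α u) (T β v) w
              - θ (T α u) (T γ w) v + θ (T β v) (T γ w) u
              + Γ₂ (T α u) (T β v) (T γ w) : V))
          = (T (α * β * γ) s, s))) :=
  twistedRBFamily_iff_graph_subalgebra_general b t ρ θ Γ₁ Γ₂ T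
end

section
/- Let {T_α: V → L}_{α∈Ω} be a Γ₁-twisted Rota-Baxter family on a representation (V; ρ) of a Lie algebra (L,[·,·]) (where Γ₁: L∧L → V is a 2-cocycle in Chevalley-Eilenberg cohomology). Define θ_ρ(x,y) := ρ(y)ρ(x) and Γ₂(x,y,z) := Γ₁([x,y],z) − ρ(z)Γ₁(x,y). Then {T_α} is a (Γ₁,Γ₂)-twisted Rota-Baxter family on the representation (V; ρ, θ_ρ) of the induced Lie-Yamaguti algebra (L, [·,·], {·,·,·}) with {x,y,z} := [[x,y],z]. -/
open scoped TensorProduct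

/-! The induced Lie-Yamaguti algebra, its representation `θ_ρ` and the pair `(Γ₁, Γ₂)` are all
built from `[·,·]`, `ρ` and `Γ₁`, so every axiom reduces to the Jacobi identity, the
representation property of `ρ` and the cocycle identity of `Γ₁`. The representation property
collapses the Lie-Yamaguti operator `D` to `ρ([x,y])`; with that, the ternary Rota-Baxter identity
is the binary one applied twice: `[[T_α u, T_β v], T_γ w] = [T_{αβ}(⋯), T_γ w]`. -/

section LieToLieYamaguti

variable {K L V : Type*} [CommRing K] [AddCommGroup L] [Module K L] [AddCommGroup V]
  [Module K V] (b : L →ₗ[K] L →ₗ[K] L) (ρ : L →ₗ[K] V →ₗ[K] V)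

theorem leibniz_of_jacobi (hskew : ∀ x y : L, b x y = - b y x)
    (hjacobi : ∀ x y z : L, b (b x y) z + b (b y z) x + b (b z x) y = 0) (x y z : L) :
    b x (b y z) = b (b x y) z + b y (b x z) := by
  have h₁ : b (b y z) x = - b x (b y z) := hskew _ _
  have h₂ : b (b z x) y = b y (b x z) := by
    rw [hskew z x, map_neg, LinearMap.neg_apply, hskew (b x z) y, neg_neg]
  linear_combination (norm := module) -hjacobi x y z + h₁ + h₂

theorem isLieYamaguti_of_lie (hskew : ∀ x y : L, b x y = - b y x)
    (hjacobi : ∀ x y z : L, b (b x y) z + b (b y z) x + b (b z x) y = 0) :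
    IsLieYamaguti (fun x y => b x y) (fun x y z => b (b x y) z) := by
  have hleib := leibniz_of_jacobi b hskew hjacobi
  refine ⟨fun _ _ x y => hskew x y, fun _ _ _ x y z => ?_, fun _ _ _ x y z => ?_,
    fun _ _ _ _ x y z a => ?_, fun _ _ _ _ a x y z => hleib (b a x) y z,
    fun _ _ _ _ _ a c x y z => ?_⟩
  · simp only [hskew x y, map_neg, LinearMap.neg_apply]
  · linear_combination (norm := module) (2 : K) • hjacobi x y z
  · simpa using congrArg (fun w => b w a) (hjacobi x y z)
  · have h := congrArg (fun w => b w z) (hleib (b a c) x y)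
    simp only [map_add, LinearMap.add_apply] at h
    linear_combination (norm := module) hleib (b a c) (b x y) z + h

theorem dmap_eq_of_rep (hrep : ∀ (x y : L) (v : V), ρ (b x y) v = ρ x (ρ y v) - ρ y (ρ x v))
    (x y : L) (v : V) :
    Dmap (fun x y => b x y) (fun x v => ρ x v) (fun x y v => ρ y (ρ x v)) x y v
      = ρ (b x y) v := by
  simp only [Dmap, hrep]
  abel

theorem isLYRep_of_rep (hrep : ∀ (x y : L) (v : V), ρ (b x y) v = ρ x (ρ y v) - ρ y (ρ x v)) :
    IsLYRep (fun x y => b x y) (fun x y z => b (b x y) z)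
      (fun x v => ρ x v) (fun x y v => ρ y (ρ x v)) := by
  refine ⟨?_, ?_, ?_, ?_, ?_⟩ <;> intros <;>
    simp only [DmapΩ, hrep, map_sub, map_add] <;> abel

variable (Γ₁ : L →ₗ[K] L →ₗ[K] V)

theorem cocycle_bracket_left_add_bracket_right (hskew : ∀ x y : L, b x y = - b y x)
    (hΓskew : ∀ x y : L, Γ₁ x y = - Γ₁ y x)
    (hcoc : ∀ x y z : L, ρ x (Γ₁ y z) + ρ y (Γ₁ z x) + ρ z (Γ₁ x y)
      = Γ₁ (b x y) z + Γ₁ (b y z) x + Γ₁ (b z x) y) (a x y : L) :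
    Γ₁ (b a x) y + Γ₁ x (b a y)
      = ρ a (Γ₁ x y) - ρ x (Γ₁ a y) + ρ y (Γ₁ a x) + Γ₁ a (b x y) := by
  have h := hcoc a x y
  rw [hΓskew y a, hΓskew (b x y) a, hΓskew (b y a) x, hskew y a] at h
  simp only [map_neg, neg_neg] at h
  linear_combination (norm := module) -h

theorem is23Cocycle_of_cocycle (hskew : ∀ x y : L, b x y = - b y x)
    (hjacobi : ∀ x y z : L, b (b x y) z + b (b y z) x + b (b z x) y = 0)
    (hrep : ∀ (x y : L) (v : V), ρ (b x y) v = ρ x (ρ y v) - ρ y (ρ x v))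
    (hΓskew : ∀ x y : L, Γ₁ x y = - Γ₁ y x)
    (hcoc : ∀ x y z : L, ρ x (Γ₁ y z) + ρ y (Γ₁ z x) + ρ z (Γ₁ x y)
      = Γ₁ (b x y) z + Γ₁ (b y z) x + Γ₁ (b z x) y) :
    Is23Cocycle (fun x y => b x y) (fun x y z => b (b x y) z)
      (fun x v => ρ x v) (fun x y v => ρ y (ρ x v))
      (fun x y => Γ₁ x y) (fun x y z => Γ₁ (b x y) z - ρ z (Γ₁ x y)) := by
  have hder := cocycle_bracket_left_add_bracket_right b ρ Γ₁ hskew hΓskew hcoc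
  have hD := dmap_eq_of_rep b ρ hrep
  refine ⟨fun x y z => ?_, fun x₁ y₁ x₂ y₂ => ?_, fun x₁ y₁ x₂ y₂ => ?_,
    fun x₁ y₁ x₂ y₂ z => ?_⟩
  · linear_combination (norm := module) (-2 : K) • hcoc x y z
  · have h₁ := congrArg (ρ y₂) (hcoc x₁ y₁ x₂)
    have h₂ := congrArg (fun w => Γ₁ w y₂) (hjacobi x₁ y₁ x₂)
    simp only [map_add, map_zero, LinearMap.add_apply, LinearMap.zero_apply] at h₁ h₂
    linear_combination (norm := module) h₁ + h₂
  · simp only [hD]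
    have h := hder (b x₁ y₁) x₂ y₂
    simp only [hrep, map_sub] at h ⊢
    linear_combination (norm := module) -h
  · simp only [hD]
    have h₁ := hder (b x₁ y₁) (b x₂ y₂) z
    have h₂ := congrArg (ρ z) (hder (b x₁ y₁) x₂ y₂)
    have h₃ := congrArg (fun w => Γ₁ w z) (leibniz_of_jacobi b hskew hjacobi (b x₁ y₁) x₂ y₂)
    simp only [hrep, map_add, map_sub, LinearMap.add_apply] at h₁ h₂ h₃ ⊢
    linear_combination (norm := module) -h₁ + h₂ + h₃

theorem isTwistedRBFamily_of_lie {Ω : Type*} [Mul Ω]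
    (hrep : ∀ (x y : L) (v : V), ρ (b x y) v = ρ x (ρ y v) - ρ y (ρ x v))
    (T : Ω → V →ₗ[K] L)
    (hT : ∀ (α β : Ω) (u v : V),
      b (T α u) (T β v) = T (α * β) (ρ (T α u) v - ρ (T β v) u + Γ₁ (T α u) (T β v))) :
    IsTwistedRBFamily (fun x y => b x y) (fun x y z => b (b x y) z)
      (fun x v => ρ x v) (fun x y v => ρ y (ρ x v))
      (fun x y => Γ₁ x y) (fun x y z => Γ₁ (b x y) z - ρ z (Γ₁ x y))
      (fun α u => T α u) := by
  refine ⟨hT, fun α β γ u v w => ?_⟩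
  change b (b (T α u) (T β v)) (T γ w) = _
  rw [hT α β u v, hT (α * β) γ, ← hT α β u v, dmap_eq_of_rep b ρ hrep]
  congr 1
  simp only [map_sub, map_add]
  abel

end LieToLieYamaguti

/-- A `Γ₁`-twisted Rota-Baxter family on a Lie algebra
representation is a `(Γ₁,Γ₂)`-twisted Rota-Baxter family on the induced
Lie-Yamaguti algebra, for the representation `θ_ρ(x,y) = ρ(y)ρ(x)` and
`Γ₂(x,y,z) = Γ₁([x,y],z) - ρ(z)Γ₁(x,y)`. -/
theorem lieTwistedRBFamily_to_lyTwistedRBFamily {K L V Ω : Type*} [Field K]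
    [AddCommGroup L] [Module K L] [AddCommGroup V] [Module K V] [CommSemigroup Ω]
    (b : L →ₗ[K] L →ₗ[K] L)
    (hskew : ∀ x y : L, b x y = - b y x)
    (hjacobi : ∀ x y z : L, b (b x y) z + b (b y z) x + b (b z x) y = 0)
    (ρ : L →ₗ[K] V →ₗ[K] V)
    (hrep : ∀ (x y : L) (v : V), ρ (b x y) v = ρ x (ρ y v) - ρ y (ρ x v))
    (Γ₁ : L →ₗ[K] L →ₗ[K] V)
    (hΓskew : ∀ x y : L, Γ₁ x y = - Γ₁ y x)
    (hcoc : ∀ x y z : L, ρ x (Γ₁ y z) + ρ y (Γ₁ z x) + ρ z (Γ₁ x y)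
      = Γ₁ (b x y) z + Γ₁ (b y z) x + Γ₁ (b z x) y)
    (T : Ω → V →ₗ[K] L)
    (hT : ∀ (α β : Ω) (u v : V),
      b (T α u) (T β v)
        = T (α * β) (ρ (T α u) v - ρ (T β v) u + Γ₁ (T α u) (T β v))) :
    IsLieYamaguti (fun x y => b x y) (fun x y z => b (b x y) z) ∧
    IsLYRep (fun x y => b x y) (fun x y z => b (b x y) z)
      (fun x v => ρ x v) (fun x y v => ρ y (ρ x v)) ∧
    Is23Cocycle (fun x y => b x y) (fun x y z => b (b x y) z)
      (fun x v => ρ x v) (fun x y v => ρ y (ρ x v))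
      (fun x y => Γ₁ x y) (fun x y z => Γ₁ (b x y) z - ρ z (Γ₁ x y)) ∧
    IsTwistedRBFamily (fun x y => b x y) (fun x y z => b (b x y) z)
      (fun x v => ρ x v) (fun x y v => ρ y (ρ x v))
      (fun x y => Γ₁ x y) (fun x y z => Γ₁ (b x y) z - ρ z (Γ₁ x y))
      (fun α u => T α u) :=
  ⟨isLieYamaguti_of_lie b hskew hjacobi, isLYRep_of_rep b ρ hrep,
    is23Cocycle_of_cocycle b ρ Γ₁ hskew hjacobi hrep hΓskew hcoc,
    isTwistedRBFamily_of_lie b ρ Γ₁ hrep T hT⟩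
end
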